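/- Let α ∈ (1/3, 1), let x : [0,3] → ℝ be α-Hölder, let a : [0,3] → ℝ be of class C¹, and let u : ℝ² → ℝ be of class C³. Then for every t ∈ [0,2] the Russo–Vallois symmetric integral ∫_0^t (∂u/∂x)(x(s), a(s)) d°x(s) exists and the change-of-variables formula u(x(t), a(t)) = u(x(0), a(0)) + ∫_0^t (∂u/∂x)(x(s), a(s)) d°x(s) + ∫_0^t (∂u/∂v)(x(s), a(s)) a′(s) ds holds. -/

import Mathlib

/-!
Write `γ = (x, a)`, `Δx = x (s + ε) - x s`, `Δa = a (s + ε) - a s`. Expanding `u` to second order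
at both ends of `[γ s, γ (s + ε)]`, the second-order terms cancel in the trapezoid average, so
`u (γ (s + ε)) - u (γ s) = ½ (∂ₓu (γ (s + ε)) + ∂ₓu (γ s)) Δx + ∂ᵥu (γ s) Δa` up to an error
`O(‖Δγ‖³ + ‖Δγ‖ |Δa|) = O(ε ^ (3α) + ε ^ (1 + α))`. As `3α > 1`, this error integrates to `o(ε)`
over `[0, t]`, while `ε⁻¹ ∫₀ᵗ (u (γ (s + ε)) - u (γ s)) ds → u (γ t) - u (γ 0)` and
`ε⁻¹ ∫₀ᵗ ∂ᵥu (γ s) Δa ds → ∫₀ᵗ ∂ᵥu (γ s) a' s ds`.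
Outside `[0, 3]`, `x` is replaced by its clamped extension, which is Hölder on all of `ℝ` and
leaves the integrals over `[0, t]`, `t ≤ 2`, unchanged for `ε < 1`.
-/

open MeasureTheory Filter Set
open scoped NNReal Topology Interval

/-- `z` is `α`-Hölder on the interval `[a, b]`. -/
def HolderOnIcc (α a b : ℝ) (z : ℝ → ℝ) : Prop :=
  ∃ L > 0, ∀ s ∈ Set.Icc a b, ∀ t ∈ Set.Icc a b, |z t - z s| ≤ L * |t - s| ^ α

/-- `I` is the Russo–Vallois symmetric integral `∫_a^b z(s) d°x(s)` (for `a > b` the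
interval integral is by convention the negative of the one from `b` to `a`). -/
def RVTendsto (z x : ℝ → ℝ) (a b I : ℝ) : Prop :=
  Filter.Tendsto
    (fun ε : ℝ => ε⁻¹ * ∫ s in a..b, ((z (s + ε) + z s) / 2) * (x (s + ε) - x s))
    (nhdsWithin 0 (Set.Ioi 0)) (nhds I)

/-- `A` is an `α`-Lévy area of order 0 associated with `γ = (x, y)` on `[0, 2]`. -/
def IsLevyArea0 (α : ℝ) (x y : ℝ → ℝ) (A : ℝ → ℝ → ℝ) : Prop :=
  (∀ r ∈ Set.Icc (0:ℝ) 2, ∀ s ∈ Set.Icc (0:ℝ) 2, ∀ t ∈ Set.Icc (0:ℝ) 2,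
    A r s + A s t + A t r
      = -(1/2) * ((y t - y s) * (x r - x s) - (y r - y s) * (x t - x s)))
  ∧ ∃ C > 0, ∀ s ∈ Set.Icc (0:ℝ) 2, ∀ t ∈ Set.Icc (0:ℝ) 2,
      |A s t| ≤ C * |t - s| ^ (2 * α)

/-- The `ε`-approximation `I_ε^{[a,b]}(f)` of the corrected symmetric integral. -/
noncomputable def Ieps (x y : ℝ → ℝ) (A : ℝ → ℝ → ℝ) (f : ℝ → ℝ) (a b ε : ℝ) : ℝ :=
  ε⁻¹ * (∫ u in a..b, ((f (y u) + f (y (u + ε))) / 2) * (x (u + ε) - x u))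
    + ε⁻¹ * (∫ u in a..b, deriv f (y u) * A u (u + ε))

section Trapezoid

variable {E F : Type*} [NormedAddCommGroup E] [NormedSpace ℝ E]
  [NormedAddCommGroup F] [NormedSpace ℝ F]

theorem Convex.norm_sub_sub_fderiv_le_of_lipschitzOnWith {s : Set E} {g : E → F}
    {g' : E → E →L[ℝ] F} {K : ℝ≥0} (hs : Convex ℝ s) (hg : ∀ z, HasFDerivAt g (g' z) z)
    (hg' : LipschitzOnWith K g' s) {y p : E} (hy : y ∈ s) (hp : p ∈ s) :
    ‖g p - g y - g' y (p - y)‖ ≤ K * ‖p - y‖ ^ 2 := by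
  have hsub : segment ℝ y p ⊆ s := hs.segment_subset hy hp
  calc ‖g p - g y - g' y (p - y)‖ ≤ K * ‖p - y‖ * ‖p - y‖ :=
        (convex_segment y p).norm_image_sub_le_of_norm_hasFDerivWithin_le'
          (fun z _ => (hg z).hasFDerivWithinAt)
          (fun z hz => (hg'.norm_sub_le (hsub hz) hy).trans <|
            mul_le_mul_of_nonneg_left (norm_sub_le_of_mem_segment hz) K.2)
          (left_mem_segment ℝ y p) (right_mem_segment ℝ y p)
    _ = K * ‖p - y‖ ^ 2 := by ring

theorem norm_sub_sub_trapezoid_le {f : E → F} {f' : E → E →L[ℝ] F}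
    {f'' : E → E →L[ℝ] E →L[ℝ] F} {K : ℝ≥0} {p q : E}
    (hf : ∀ z, HasFDerivAt f (f' z) z) (hf' : ∀ z, HasFDerivAt f' (f'' z) z)
    (hK : LipschitzOnWith K f'' (segment ℝ p q)) :
    ‖f q - f p - (2 : ℝ)⁻¹ • (f' p (q - p) + f' q (q - p))‖ ≤ K / 2 * ‖q - p‖ ^ 3 := by
  set h : E → F := fun y => f y - f p - (2 : ℝ)⁻¹ • (f' p (y - p) + f' y (y - p))
  have hh : ∀ y, HasFDerivAt h ((2 : ℝ)⁻¹ • (f' y - f' p - f'' y (y - p))) y := by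
    intro y
    have hsub : HasFDerivAt (fun y : E => y - p) (ContinuousLinearMap.id ℝ E) y :=
      (hasFDerivAt_id y).sub_const p
    convert ((hf y).sub_const (f p)).sub
      ((((f' p).hasFDerivAt.comp y hsub).add ((hf' y).clm_apply hsub)).const_smul (2 : ℝ)⁻¹)
      using 1
    · rfl
    ext w
    simp only [FunLike.coe_sub, FunLike.coe_smul, FunLike.coe_add, Pi.sub_apply, Pi.smul_apply,
      Pi.add_apply, ContinuousLinearMap.coe_comp, ContinuousLinearMap.coe_id', Function.comp_apply,
      id_eq, ContinuousLinearMap.flip_apply]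
    rw [second_derivative_symmetric hf (hf' y) w (y - p)]
    module
  calc ‖f q - f p - (2 : ℝ)⁻¹ • (f' p (q - p) + f' q (q - p))‖ = ‖h q - h p‖ := by
        simp [h]
    _ ≤ K / 2 * ‖q - p‖ ^ 2 * ‖q - p‖ := by
        refine (convex_segment p q).norm_image_sub_le_of_norm_hasFDerivWithin_le
          (fun z _ => (hh z).hasFDerivWithinAt) (fun y hy => ?_)
          (left_mem_segment ℝ p q) (right_mem_segment ℝ p q)
        have htaylor := (convex_segment p q).norm_sub_sub_fderiv_le_of_lipschitzOnWith hf' hK hy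
          (left_mem_segment ℝ p q)
        rw [norm_smul, norm_inv, Real.norm_two, ← norm_neg]
        calc 2⁻¹ * ‖-(f' y - f' p - f'' y (y - p))‖
            = 2⁻¹ * ‖f' p - f' y - f'' y (p - y)‖ := by
              congr 2; rw [← neg_sub y p, map_neg]; abel
          _ ≤ 2⁻¹ * (K * ‖p - y‖ ^ 2) := by gcongr
          _ ≤ 2⁻¹ * (K * ‖q - p‖ ^ 2) := by
              rw [norm_sub_rev]; gcongr; exact norm_sub_le_of_mem_segment hy
          _ = K / 2 * ‖q - p‖ ^ 2 := by ring
    _ = K / 2 * ‖q - p‖ ^ 3 := by ring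

end Trapezoid

theorem ContinuousLinearMap.apply_eq_fst_smul_add_snd_smul {F : Type*} [AddCommGroup F] [Module ℝ F]
    [TopologicalSpace F] (L : ℝ × ℝ →L[ℝ] F) (v : ℝ × ℝ) :
    L v = v.1 • L (1, 0) + v.2 • L (0, 1) := by
  rw [← map_smul, ← map_smul, ← map_add]; congr 1; ext <;> simp

theorem abs_sub_sub_trapezoid_fst_sub_snd_le {u : ℝ × ℝ → ℝ} {s : Set (ℝ × ℝ)} {K₁ K₂ : ℝ≥0}
    (hu : ContDiff ℝ 2 u) (hs : Convex ℝ s) (hK₁ : LipschitzOnWith K₁ (fderiv ℝ u) s)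
    (hK₂ : LipschitzOnWith K₂ (fderiv ℝ (fderiv ℝ u)) s) {p q : ℝ × ℝ} (hp : p ∈ s)
    (hq : q ∈ s) :
    |u q - u p - (fderiv ℝ u q (1, 0) + fderiv ℝ u p (1, 0)) / 2 * (q.1 - p.1)
        - fderiv ℝ u p (0, 1) * (q.2 - p.2)|
      ≤ K₂ / 2 * ‖q - p‖ ^ 3 + K₁ / 2 * ‖q - p‖ * |q.2 - p.2| := by
  have hu' : ContDiff ℝ 1 (fderiv ℝ u) := hu.fderiv_right (by norm_num)
  have htrap := norm_sub_sub_trapezoid_le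
    (fun z => (hu.differentiable (by norm_num) z).hasFDerivAt)
    (fun z => (hu'.differentiable one_ne_zero z).hasFDerivAt)
    (hK₂.mono (hs.segment_subset hp hq))
  have hsnd : |fderiv ℝ u q (0, 1) - fderiv ℝ u p (0, 1)| ≤ K₁ * ‖q - p‖ := by
    rw [← Real.norm_eq_abs, ← sub_apply]
    calc ‖(fderiv ℝ u q - fderiv ℝ u p) (0, 1)‖
        ≤ ‖fderiv ℝ u q - fderiv ℝ u p‖ * ‖((0 : ℝ), (1 : ℝ))‖ := ContinuousLinearMap.le_opNorm _ _
      _ ≤ K₁ * ‖q - p‖ := by simpa using hK₁.norm_sub_le hq hp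
  rw [(fderiv ℝ u p).apply_eq_fst_smul_add_snd_smul, (fderiv ℝ u q).apply_eq_fst_smul_add_snd_smul,
    Real.norm_eq_abs] at htrap
  calc _ = |(u q - u p - (2 : ℝ)⁻¹ • ((q - p).1 • fderiv ℝ u p (1, 0)
              + (q - p).2 • fderiv ℝ u p (0, 1)
              + ((q - p).1 • fderiv ℝ u q (1, 0) + (q - p).2 • fderiv ℝ u q (0, 1))))
          + (fderiv ℝ u q (0, 1) - fderiv ℝ u p (0, 1)) / 2 * (q.2 - p.2)| := by
        congr 1; simp only [Prod.fst_sub, Prod.snd_sub, smul_eq_mul]; ring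
    _ ≤ K₂ / 2 * ‖q - p‖ ^ 3 + K₁ / 2 * ‖q - p‖ * |q.2 - p.2| := by
        refine (abs_add_le _ _).trans (add_le_add htrap ?_)
        rw [abs_mul, abs_div, abs_two]
        calc |fderiv ℝ u q (0, 1) - fderiv ℝ u p (0, 1)| / 2 * |q.2 - p.2|
            ≤ K₁ * ‖q - p‖ / 2 * |q.2 - p.2| := by gcongr
          _ = K₁ / 2 * ‖q - p‖ * |q.2 - p.2| := by ring

section DifferenceQuotients

open intervalIntegral

theorem tendsto_inv_mul_integral_sub_comp_add {F : ℝ → ℝ} (hF : Continuous F) (a b : ℝ) :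
    Tendsto (fun ε => ε⁻¹ * ∫ s in a..b, (F (s + ε) - F s)) (𝓝[≠] 0) (𝓝 (F b - F a)) := by
  have hG : ∀ c, HasDerivAt (fun c => ∫ s in a..c, F s) (F c) c := fun c =>
    (hF.integral_hasStrictDerivAt a c).hasDerivAt
  refine ((hG b).tendsto_slope_zero.sub (hG a).tendsto_slope_zero).congr fun ε => ?_
  have hI : ∀ c d, IntervalIntegrable F volume c d := hF.intervalIntegrable
  have hIε : IntervalIntegrable (fun s => F (s + ε)) volume a b :=
    (hF.comp (continuous_add_const ε)).intervalIntegrable a b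
  rw [integral_sub hIε (hI a b), integral_comp_add_right F ε,
    ← integral_interval_sub_left (hI a (b + ε)) (hI a (a + ε)), integral_same, smul_eq_mul,
    smul_eq_mul]
  ring

theorem tendsto_inv_mul_integral_mul_sub_comp_add {g φ : ℝ → ℝ} (hg : Continuous g)
    (hφ : ContDiff ℝ 1 φ) (a b : ℝ) :
    Tendsto (fun ε => ε⁻¹ * ∫ s in a..b, g s * (φ (s + ε) - φ s)) (𝓝[≠] 0)
      (𝓝 (∫ s in a..b, g s * deriv φ s)) := by
  obtain ⟨Kφ, hKφ⟩ := hφ.locallyLipschitz.locallyLipschitzOn.exists_lipschitzOnWith_of_compact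
    (isCompact_Icc (a := min a b - 1) (b := max a b + 1))
  obtain ⟨Mg, hMg⟩ := (isCompact_uIcc : IsCompact (uIcc a b)).exists_bound_of_continuousOn
    hg.continuousOn
  have hslope : ∀ ε, ε⁻¹ * ∫ s in a..b, g s * (φ (s + ε) - φ s)
      = ∫ s in a..b, g s * (ε⁻¹ * (φ (s + ε) - φ s)) := fun ε => by
    rw [← intervalIntegral.integral_const_mul]; congr 1; ext s; ring
  simp only [hslope]
  refine tendsto_integral_filter_of_dominated_convergence (fun _ => Mg * Kφ)
    (Eventually.of_forall fun ε => by fun_prop) ?_ intervalIntegrable_const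
    (Eventually.of_forall fun s _ => ?_)
  · filter_upwards [inter_mem_nhdsWithin _ (Metric.ball_mem_nhds 0 one_pos)]
      with ε ⟨hε0, hε1⟩
    refine Eventually.of_forall fun s hs => ?_
    obtain ⟨hs1, hs2⟩ : min a b ≤ s ∧ s ≤ max a b := uIoc_subset_uIcc hs
    rw [mem_compl_singleton_iff] at hε0
    rw [Metric.mem_ball, dist_zero_right, Real.norm_eq_abs, abs_lt] at hε1
    have hφε := hKφ.norm_sub_le (x := s + ε) (y := s) ⟨by linarith, by linarith⟩
      ⟨by linarith, by linarith⟩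
    rw [add_sub_cancel_left] at hφε
    have hg := hMg s (uIoc_subset_uIcc hs)
    rw [norm_mul, norm_mul, norm_inv]
    gcongr
    · exact (norm_nonneg _).trans hg
    · rwa [inv_mul_le_iff₀ (norm_pos_iff.2 hε0), mul_comm]
  · simpa only [smul_eq_mul] using
      ((hφ.differentiable one_ne_zero s).hasDerivAt.tendsto_slope_zero).const_mul (g s)

theorem tendsto_inv_mul_integral_of_abs_le_rpow {f : ℝ → ℝ → ℝ} {a b C β : ℝ} (hβ : 1 < β)
    (hf : ∀ᶠ ε in 𝓝[>] 0, ∀ s ∈ Ι a b, |f ε s| ≤ C * ε ^ β) :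
    Tendsto (fun ε => ε⁻¹ * ∫ s in a..b, f ε s) (𝓝[>] 0) (𝓝 0) := by
  have hlim : Tendsto (fun ε : ℝ => C * |b - a| * ε ^ (β - 1)) (𝓝[>] 0) (𝓝 0) := by
    have := ((Real.continuous_rpow_const (by linarith : 0 ≤ β - 1)).tendsto 0).const_mul
      (C * |b - a|)
    rw [Real.zero_rpow (by linarith), mul_zero] at this
    exact this.mono_left nhdsWithin_le_nhds
  refine squeeze_zero_norm' ?_ hlim
  filter_upwards [hf, self_mem_nhdsWithin] with ε hε (hε0 : 0 < ε)
  rw [norm_mul, norm_inv, Real.norm_of_nonneg hε0.le, inv_mul_le_iff₀ hε0]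
  calc ‖∫ s in a..b, f ε s‖ ≤ C * ε ^ β * |b - a| :=
        norm_integral_le_of_norm_le_const fun s hs => hε s hs
    _ = ε * (C * |b - a| * ε ^ (β - 1)) := by
        rw [Real.rpow_sub hε0, Real.rpow_one]; field_simp

end DifferenceQuotients

theorem DifferentiableAt.deriv_comp_prodMk_left {F : Type*} [NormedAddCommGroup F]
    [NormedSpace ℝ F] {u : ℝ × ℝ → F} {ξ η : ℝ} (hu : DifferentiableAt ℝ u (ξ, η)) :
    deriv (fun ξ' => u (ξ', η)) ξ = fderiv ℝ u (ξ, η) (1, 0) :=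
  (hu.hasFDerivAt.comp_hasDerivAt ξ ((hasDerivAt_id ξ).prodMk (hasDerivAt_const ξ η))).deriv

theorem DifferentiableAt.deriv_comp_prodMk_right {F : Type*} [NormedAddCommGroup F]
    [NormedSpace ℝ F] {u : ℝ × ℝ → F} {ξ η : ℝ} (hu : DifferentiableAt ℝ u (ξ, η)) :
    deriv (fun η' => u (ξ, η')) η = fderiv ℝ u (ξ, η) (0, 1) :=
  (hu.hasFDerivAt.comp_hasDerivAt η ((hasDerivAt_const η ξ).prodMk (hasDerivAt_id η))).deriv

theorem continuous_of_abs_sub_le_rpow {x : ℝ → ℝ} {L α : ℝ} (hα : 0 < α)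
    (hx : ∀ s t, |x t - x s| ≤ L * |t - s| ^ α) : Continuous x := by
  refine continuous_iff_continuousAt.2 fun s => tendsto_iff_dist_tendsto_zero.2 <|
    squeeze_zero (fun _ => dist_nonneg) (fun t => (Real.dist_eq _ _).trans_le (hx s t)) ?_
  refine Continuous.tendsto' ?_ s 0 (by simp [Real.zero_rpow hα.ne'])
  exact continuous_const.mul ((continuous_sub_right s).abs.rpow_const fun _ => Or.inr hα.le)

theorem HolderOnIcc.exists_abs_sub_comp_projIcc_le {α a b : ℝ} {x : ℝ → ℝ}
    (hx : HolderOnIcc α a b x) (hab : a ≤ b) (hα : 0 ≤ α) :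
    ∃ L, ∀ s t, |x (projIcc a b hab t) - x (projIcc a b hab s)| ≤ L * |t - s| ^ α := by
  obtain ⟨L, hL, hxL⟩ := hx
  refine ⟨L, fun s t => (hxL _ (projIcc a b hab s).2 _ (projIcc a b hab t).2).trans ?_⟩
  exact mul_le_mul_of_nonneg_left
    (Real.rpow_le_rpow (abs_nonneg _) (abs_projIcc_sub_projIcc hab) hα) hL.le

theorem RVTendsto.congr_of_eqOn {z z' x x' : ℝ → ℝ} {a b c I : ℝ} (h : RVTendsto z x a b I)
    (hab : a ≤ b) (hbc : b < c) (hz : EqOn z z' (Icc a c)) (hx : EqOn x x' (Icc a c)) :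
    RVTendsto z' x' a b I := by
  refine h.congr' ?_
  filter_upwards [Ioo_mem_nhdsGT (sub_pos.2 hbc)] with ε hε
  congr 1
  refine intervalIntegral.integral_congr fun s hs => ?_
  rw [uIcc_of_le hab] at hs
  have h₁ : s ∈ Icc a c := ⟨hs.1, by linarith [hs.2]⟩
  have h₂ : s + ε ∈ Icc a c := ⟨by linarith [hs.1, hε.1], by linarith [hs.2, hε.2]⟩
  simp only [hz h₁, hz h₂, hx h₁, hx h₂]

section SymmetricIntegral

open intervalIntegral

variable {α L : ℝ} {x a : ℝ → ℝ} {u : ℝ × ℝ → ℝ}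

noncomputable def symmetricDefect (u : ℝ × ℝ → ℝ) (x a : ℝ → ℝ) (ε s : ℝ) : ℝ :=
  u (x (s + ε), a (s + ε)) - u (x s, a s)
    - (fderiv ℝ u (x (s + ε), a (s + ε)) (1, 0) + fderiv ℝ u (x s, a s) (1, 0)) / 2
      * (x (s + ε) - x s)
    - fderiv ℝ u (x s, a s) (0, 1) * (a (s + ε) - a s)

theorem exists_abs_symmetricDefect_le_rpow (hα : 0 < α) (hα1 : α ≤ 1)
    (hx : ∀ s t, |x t - x s| ≤ L * |t - s| ^ α) (ha : ContDiff ℝ 1 a) (hu : ContDiff ℝ 3 u)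
    (T : ℝ) :
    ∃ C, ∀ ε ∈ Ioc (0 : ℝ) 1, ∀ s ∈ Icc (-T) T,
      |symmetricDefect u x a ε s| ≤ C * ε ^ min (3 * α) (1 + α) := by
  have hL : 0 ≤ L := (abs_nonneg _).trans (by simpa using hx 0 1)
  have hγ : Continuous fun s => (x s, a s) :=
    (continuous_of_abs_sub_le_rpow hα hx).prodMk ha.continuous
  obtain ⟨R, hR⟩ :=
    ((isCompact_Icc (a := -T) (b := T + 1)).image hγ).isBounded.subset_closedBall 0
  have hu2 : ContDiff ℝ 2 (fderiv ℝ u) := hu.fderiv_right (by norm_num)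
  obtain ⟨K₁, hK₁⟩ := (hu2.of_le one_le_two).locallyLipschitz.locallyLipschitzOn
    |>.exists_lipschitzOnWith_of_compact (isCompact_closedBall (0 : ℝ × ℝ) R)
  obtain ⟨K₂, hK₂⟩ := (hu2.fderiv_right le_rfl).locallyLipschitz.locallyLipschitzOn
    |>.exists_lipschitzOnWith_of_compact (isCompact_closedBall (0 : ℝ × ℝ) R)
  obtain ⟨Ka, hKa⟩ := ha.locallyLipschitz.locallyLipschitzOn.exists_lipschitzOnWith_of_compact
    (isCompact_Icc (a := -T) (b := T + 1))
  set A := L + Ka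
  refine ⟨K₂ / 2 * A ^ 3 + K₁ / 2 * A * Ka, fun ε ⟨hε0, hε1⟩ s ⟨hs1, hs2⟩ => ?_⟩
  have hsJ : s ∈ Icc (-T) (T + 1) := ⟨hs1, by linarith⟩
  have hsεJ : s + ε ∈ Icc (-T) (T + 1) := ⟨by linarith, by linarith⟩
  have hεα : ε ≤ ε ^ α := by simpa using Real.rpow_le_rpow_of_exponent_ge hε0 hε1 hα1
  have hΔx : |x (s + ε) - x s| ≤ L * ε ^ α := by
    simpa [abs_of_pos hε0] using hx s (s + ε)
  have hΔa : |a (s + ε) - a s| ≤ Ka * ε := by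
    simpa [abs_of_pos hε0] using hKa.norm_sub_le hsεJ hsJ
  have hΔγ : ‖(x (s + ε), a (s + ε)) - (x s, a s)‖ ≤ A * ε ^ α := by
    have := Real.rpow_nonneg hε0.le α
    refine max_le ?_ ?_ <;> simp only [Prod.fst_sub, Prod.snd_sub, Real.norm_eq_abs, A]
    · nlinarith [Ka.2]
    · nlinarith [Ka.2, mul_nonneg hL this]
  have hA : 0 ≤ A := add_nonneg hL Ka.2
  have e₃ : (ε ^ α) ^ 3 = ε ^ (3 * α) := by
    rw [← Real.rpow_mul_natCast hε0.le, mul_comm]; norm_num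
  have e₁ : ε ^ α * ε = ε ^ (1 + α) := by rw [add_comm, Real.rpow_add_one hε0.ne']
  calc |symmetricDefect u x a ε s|
        ≤ K₂ / 2 * (A * ε ^ α) ^ 3 + K₁ / 2 * (A * ε ^ α) * (Ka * ε) :=
        (abs_sub_sub_trapezoid_fst_sub_snd_le (hu.of_le (by norm_num)) (convex_closedBall _ _)
          hK₁ hK₂ (hR ⟨s, hsJ, rfl⟩) (hR ⟨s + ε, hsεJ, rfl⟩)).trans (by gcongr)
    _ = K₂ / 2 * A ^ 3 * ε ^ (3 * α) + K₁ / 2 * A * Ka * ε ^ (1 + α) := by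
        rw [← e₃, ← e₁]; ring
    _ ≤ K₂ / 2 * A ^ 3 * ε ^ min (3 * α) (1 + α)
          + K₁ / 2 * A * Ka * ε ^ min (3 * α) (1 + α) := by
        gcongr _ * ?_ + _ * ?_ <;> exact Real.rpow_le_rpow_of_exponent_ge hε0 hε1 (by simp)
    _ = (K₂ / 2 * A ^ 3 + K₁ / 2 * A * Ka) * ε ^ min (3 * α) (1 + α) := by ring

theorem rvTendsto_of_abs_sub_le_rpow (hα : 1 / 3 < α) (hα1 : α ≤ 1)
    (hx : ∀ s t, |x t - x s| ≤ L * |t - s| ^ α) (ha : ContDiff ℝ 1 a) (hu : ContDiff ℝ 3 u)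
    (t : ℝ) :
    RVTendsto (fun s => deriv (fun ξ => u (ξ, a s)) (x s)) x 0 t
      (u (x t, a t) - u (x 0, a 0)
        - ∫ s in (0 : ℝ)..t, deriv (fun η => u (x s, η)) (a s) * deriv a s) := by
  have hxc := continuous_of_abs_sub_le_rpow (by linarith) hx
  have hu1 : Differentiable ℝ u := hu.differentiable (by norm_num)
  have hDu : Continuous (fderiv ℝ u) := hu.continuous_fderiv (by norm_num)
  simp only [RVTendsto, fun s => (hu1 (x s, a s)).deriv_comp_prodMk_left,
    fun s => (hu1 (x s, a s)).deriv_comp_prodMk_right]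
  obtain ⟨C, hC⟩ := exists_abs_symmetricDefect_le_rpow (by linarith) hα1 hx ha hu |t|
  have hF := tendsto_inv_mul_integral_sub_comp_add (F := fun s => u (x s, a s)) (by fun_prop) 0 t
  have hA := tendsto_inv_mul_integral_mul_sub_comp_add
    (g := fun s => fderiv ℝ u (x s, a s) (0, 1)) (by fun_prop) ha 0 t
  have hE := tendsto_inv_mul_integral_of_abs_le_rpow (f := symmetricDefect u x a) (a := 0)
    (b := t) (β := min (3 * α) (1 + α)) (lt_min (by linarith) (by linarith)) <| by
      filter_upwards [Ioc_mem_nhdsGT one_pos] with ε hε s hs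
      exact hC ε hε s <| abs_le.1 <| by
        simpa using abs_sub_left_of_mem_uIcc (uIoc_subset_uIcc hs)
  have hlim :=
    ((hF.mono_left (nhdsGT_le_nhdsNE 0)).sub (hA.mono_left (nhdsGT_le_nhdsNE 0))).sub hE
  rw [sub_zero] at hlim
  refine hlim.congr fun ε => ?_
  have hI : ∀ {f : ℝ → ℝ}, Continuous f → IntervalIntegrable f volume 0 t :=
    fun hf => hf.intervalIntegrable 0 t
  rw [← mul_sub, ← mul_sub, ← integral_sub (hI (by fun_prop)) (hI (by fun_prop)),
    ← integral_sub (hI (by fun_prop)) (hI (by unfold symmetricDefect; fun_prop))]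
  congr 1
  refine integral_congr fun s _ => ?_
  simp only [symmetricDefect]
  ring

end SymmetricIntegral

theorem stmt_13 (α : ℝ) (hα : α ∈ Set.Ioo (1/3 : ℝ) 1)
    (x : ℝ → ℝ) (hx : HolderOnIcc α 0 3 x)
    (a : ℝ → ℝ) (ha : ContDiff ℝ 1 a)
    (u : ℝ × ℝ → ℝ) (hu : ContDiff ℝ 3 u) :
    ∀ t ∈ Set.Icc (0:ℝ) 2,
      ∃ I : ℝ,
        RVTendsto (fun s => deriv (fun ξ => u (ξ, a s)) (x s)) x 0 t I ∧
        u (x t, a t) = u (x 0, a 0) + I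
          + ∫ s in (0:ℝ)..t, deriv (fun η => u (x s, η)) (a s) * deriv a s := by
  intro t ht
  obtain ⟨L, hL⟩ := hx.exists_abs_sub_comp_projIcc_le zero_le_three (by linarith [hα.1])
  have hext : ∀ s ∈ Icc (0 : ℝ) 3, x (projIcc 0 3 zero_le_three s) = x s := fun s hs => by
    rw [projIcc_of_mem _ hs]
  have hsub : uIcc 0 t ⊆ Icc 0 3 := by
    rw [uIcc_of_le ht.1]; exact Icc_subset_Icc le_rfl (by linarith [ht.2])
  refine ⟨_, (rvTendsto_of_abs_sub_le_rpow hα.1 hα.2.le hL ha hu t).congr_of_eqOn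
    ht.1 (by linarith [ht.2]) (fun s hs => by simp only [hext s hs]) hext, ?_⟩
  have hint : ∫ s in (0 : ℝ)..t, deriv (fun η => u (x (projIcc 0 3 zero_le_three s), η)) (a s)
      * deriv a s = ∫ s in (0 : ℝ)..t, deriv (fun η => u (x s, η)) (a s) * deriv a s :=
    intervalIntegral.integral_congr fun s hs => by simp only [hext s (hsub hs)]
  rw [hext t (hsub right_mem_uIcc), hext 0 (hsub left_mem_uIcc), hint]
  ring
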